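/- Let X and Y be locally compact, connected Hausdorff spaces and f ∈ C_c(X × Y). If ρ is a quasi-integral on C_c(X) with corresponding compact-finite topological measure μ, then the function T_ρ(f) : Y → ℝ, T_ρ(f)(y) = ρ(f_y), is continuous with compact support, and ‖T_ρ(f)‖∞ ≤ ‖f‖∞ · μ(π₁(supp f)), where π₁ : X × Y → X is the canonical projection. Similarly, if η is a quasi-integral on C_c(Y) with corresponding topological measure ν, then S_η(f) : X → ℝ, S_η(f)(x) = η(f_x), is continuous with compact support and ‖S_η(f)‖∞ ≤ ‖f‖∞ · ν(π₂(supp f)). -/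

import Mathlib

open scoped ENNReal CompactlySupported
open CompactlySupportedContinuousMap

namespace QLF

variable {X Y : Type*}

/-- Membership in the singly generated subalgebra `B(f)`:
`g ∈ B(f)` iff `g = φ ∘ f` for some continuous `φ` with `φ 0 = 0`. -/
def InB [TopologicalSpace X] (f g : C_c(X, ℝ)) : Prop :=
  ∃ φ : C(ℝ, ℝ), φ 0 = 0 ∧ ∀ x, g x = φ (f x)

/-- A quasi-integral (quasi-linear functional) on `C_c(X)`. -/
structure IsQuasiIntegral [TopologicalSpace X] (ρ : C_c(X, ℝ) → ℝ) : Prop where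
  smul : ∀ (a : ℝ) (f : C_c(X, ℝ)), ρ (a • f) = a * ρ f
  add : ∀ f g h : C_c(X, ℝ), InB f g → InB f h → ρ (g + h) = ρ g + ρ h
  pos : ∀ f : C_c(X, ℝ), (∀ x, 0 ≤ f x) → 0 ≤ ρ f

/-- The value of the topological measure corresponding to `ρ` on an open set. -/
noncomputable def qiOpen [TopologicalSpace X] (ρ : C_c(X, ℝ) → ℝ) (U : Set X) : ℝ≥0∞ :=
  ⨆ (f : C_c(X, ℝ)) (_ : (∀ x, 0 ≤ f x ∧ f x ≤ 1) ∧ tsupport f ⊆ U), ENNReal.ofReal (ρ f)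

open Classical in
/-- The topological measure corresponding to a quasi-integral `ρ`:
on open sets given by `qiOpen`, on other (closed) sets by outer regularity. -/
noncomputable def qiMeas [TopologicalSpace X] (ρ : C_c(X, ℝ) → ℝ) (A : Set X) : ℝ≥0∞ :=
  if IsOpen A then qiOpen ρ A
  else ⨅ (U : Set X) (_ : IsOpen U ∧ A ⊆ U), qiOpen ρ U

/-- A topological measure on `X` (as a set function on all sets; only its values on
open and closed sets are constrained/meaningful). -/
def IsTopMeasure [TopologicalSpace X] (μ : Set X → ℝ≥0∞) : Prop :=
  (∀ A B : Set X, Disjoint A B → (IsCompact A ∨ IsOpen A) → (IsCompact B ∨ IsOpen B) →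
      (IsCompact (A ∪ B) ∨ IsOpen (A ∪ B)) → μ (A ∪ B) = μ A + μ B) ∧
  (∀ U : Set X, IsOpen U → μ U = ⨆ (K : Set X) (_ : IsCompact K ∧ K ⊆ U), μ K) ∧
  (∀ F : Set X, IsClosed F → μ F = ⨅ (U : Set X) (_ : IsOpen U ∧ F ⊆ U), μ U)

/-- A simple topological measure: assumes only the values 0 and 1 on open and closed sets. -/
def IsSimpleTM [TopologicalSpace X] (μ : Set X → ℝ≥0∞) : Prop :=
  IsTopMeasure μ ∧ ∀ A : Set X, IsOpen A ∨ IsClosed A → μ A = 0 ∨ μ A = 1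

/-- A simple quasi-integral: its corresponding topological measure assumes only 0 and 1. -/
def IsSimpleQI [TopologicalSpace X] (ρ : C_c(X, ℝ) → ℝ) : Prop :=
  ∀ A : Set X, IsOpen A ∨ IsClosed A → qiMeas ρ A = 0 ∨ qiMeas ρ A = 1

/-- An almost simple quasi-integral: its corresponding topological measure is a positive
scalar multiple of a simple topological measure. -/
def IsAlmostSimpleQI [TopologicalSpace X] (ρ : C_c(X, ℝ) → ℝ) : Prop :=
  ∃ (c : ℝ≥0∞) (μ' : Set X → ℝ≥0∞), 0 < c ∧ c ≠ ∞ ∧ IsSimpleTM μ' ∧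
    ∀ A : Set X, IsOpen A ∨ IsClosed A → qiMeas ρ A = c * μ' A

/-- The composition `φ ∘ f` as an element of `C_c(X, ℝ)`, for continuous `φ` with `φ 0 = 0`. -/
noncomputable def compCc [TopologicalSpace X] (φ : C(ℝ, ℝ)) (hφ : φ 0 = 0)
    (f : C_c(X, ℝ)) : C_c(X, ℝ) :=
  ⟨⟨fun x => φ (f x), φ.continuous.comp f.continuous⟩, f.hasCompactSupport'.comp_left hφ⟩

section Products

variable [TopologicalSpace X] [TopologicalSpace Y]

/-- The section `f_y ∈ C_c(X)` of `f ∈ C_c(X × Y)`, `f_y (x) = f (x, y)`. -/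
noncomputable def fiberY [T2Space X] (f : C_c(X × Y, ℝ)) (y : Y) : C_c(X, ℝ) :=
  ⟨⟨fun x => f (x, y), f.continuous.comp (continuous_id.prodMk continuous_const)⟩,
    HasCompactSupport.intro (f.hasCompactSupport'.image continuous_fst)
      (fun x hx => by
        by_contra h
        exact hx ⟨(x, y), subset_tsupport _ h, rfl⟩)⟩

/-- The section `f_x ∈ C_c(Y)` of `f ∈ C_c(X × Y)`, `f_x (y) = f (x, y)`. -/
noncomputable def fiberX [T2Space Y] (f : C_c(X × Y, ℝ)) (x : X) : C_c(Y, ℝ) :=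
  ⟨⟨fun y => f (x, y), f.continuous.comp (continuous_const.prodMk continuous_id)⟩,
    HasCompactSupport.intro (f.hasCompactSupport'.image continuous_snd)
      (fun y hy => by
        by_contra h
        exact hy ⟨(x, y), subset_tsupport _ h, rfl⟩)⟩

/-- `T_ρ(f) (y) = ρ (f_y)` as a bare function on `Y`. -/
noncomputable def Tmap [T2Space X] (ρ : C_c(X, ℝ) → ℝ) (f : C_c(X × Y, ℝ)) : Y → ℝ :=
  fun y => ρ (fiberY f y)

/-- `S_η(f) (x) = η (f_x)` as a bare function on `X`. -/
noncomputable def Smap [T2Space Y] (η : C_c(Y, ℝ) → ℝ) (f : C_c(X × Y, ℝ)) : X → ℝ :=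
  fun x => η (fiberX f x)

open Classical in
/-- `T_ρ(f)` as an element of `C_c(Y, ℝ)` (when `ρ` is a quasi-integral, `T_ρ(f)` is indeed
continuous with compact support, and this definition takes the first branch). -/
noncomputable def TCc [T2Space X] (ρ : C_c(X, ℝ) → ℝ) (f : C_c(X × Y, ℝ)) : C_c(Y, ℝ) :=
  if h : Continuous (Tmap ρ f) ∧ HasCompactSupport (Tmap ρ f)
  then ⟨⟨Tmap ρ f, h.1⟩, h.2⟩ else 0

open Classical in
/-- `S_η(f)` as an element of `C_c(X, ℝ)`. -/
noncomputable def SCc [T2Space Y] (η : C_c(Y, ℝ) → ℝ) (f : C_c(X × Y, ℝ)) : C_c(X, ℝ) :=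
  if h : Continuous (Smap η f) ∧ HasCompactSupport (Smap η f)
  then ⟨⟨Smap η f, h.1⟩, h.2⟩ else 0

/-- The repeated quasi-integral `(η × ρ) (f) = η (T_ρ (f))`. -/
noncomputable def prodQI [T2Space X] (η : C_c(Y, ℝ) → ℝ) (ρ : C_c(X, ℝ) → ℝ) :
    C_c(X × Y, ℝ) → ℝ := fun f => η (TCc ρ f)

/-- The repeated quasi-integral `(ρ × η) (f) = ρ (S_η (f))`. -/
noncomputable def prodQI' [T2Space Y] (ρ : C_c(X, ℝ) → ℝ) (η : C_c(Y, ℝ) → ℝ) :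
    C_c(X × Y, ℝ) → ℝ := fun f => ρ (SCc η f)

/-- The tensor product `(g ⊗ h) (x, y) = g (x) * h (y)` as an element of `C_c(X × Y, ℝ)`. -/
noncomputable def tensor (g : C_c(X, ℝ)) (h : C_c(Y, ℝ)) : C_c(X × Y, ℝ) :=
  ⟨⟨fun p => g p.1 * h p.2,
      (g.continuous.comp continuous_fst).mul (h.continuous.comp continuous_snd)⟩,
    HasCompactSupport.intro' (g.hasCompactSupport'.prod h.hasCompactSupport')
      ((isClosed_tsupport _).prod (isClosed_tsupport _))
      (fun p hp => by
        rcases not_and_or.mp (by simpa [Set.mem_prod] using hp) with h1 | h1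
        · simp [image_eq_zero_of_notMem_tsupport h1]
        · simp [image_eq_zero_of_notMem_tsupport h1])⟩

end Products

/-- A topological measure is subadditive (equivalently, extends to a Borel measure). -/
def IsSubadditiveOnOpens [TopologicalSpace X] (μ : Set X → ℝ≥0∞) : Prop :=
  ∀ U V : Set X, IsOpen U → IsOpen V → μ (U ∪ V) ≤ μ U + μ V

/-- `μ` is a positive scalar multiple of a point mass `δ_{x₀}` (on open and closed sets). -/
def IsPointMassMultiple [TopologicalSpace X] (μ : Set X → ℝ≥0∞) : Prop :=
  ∃ (c : ℝ≥0∞) (x₀ : X), 0 < c ∧ c ≠ ∞ ∧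
    ∀ A : Set X, IsOpen A ∨ IsClosed A →
      μ A = c * A.indicator (fun _ => (1 : ℝ≥0∞)) x₀

end QLF

/-!
The fibres `f_y` are supported in the compact set `K = π₁ (supp f)` and depend uniformly
continuously on `y`. So everything reduces to two estimates for a quasi-integral `ρ` and a
`u ∈ C_c(X)` with `0 ≤ u ≤ 1` and `u = 1` on the supports involved:
`|ρ v| ≤ ‖v‖∞ ρ u` and `|ρ g - ρ h| ≤ 4 ‖g - h‖∞ ρ u`. Although `ρ` is additive only on singly
generated subalgebras, it is monotone across them in the form `ρ v ≤ ρ u` whenever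
`0 ≤ v, u ≤ c` and `u = c` on `supp v`; the second estimate follows by cutting nonnegative
functions into layers of height `δ` and comparing layers. Taking `u` supported in an arbitrary
open `U ⊇ K` gives the bound by `μ(K)`. The statement for `S_η` is the one for `T_η` applied to
`f ∘ swap`.
-/

namespace QLF

open Function Set Filter Topology

section QuasiIntegral

variable {Z : Type*} [TopologicalSpace Z]

lemma InB.zero (f : C_c(Z, ℝ)) : InB f 0 :=
  ⟨0, rfl, fun _ => rfl⟩

lemma InB.add {f g h : C_c(Z, ℝ)} (hg : InB f g) (hh : InB f h) : InB f (g + h) := by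
  obtain ⟨φ, hφ0, hφ⟩ := hg
  obtain ⟨ψ, hψ0, hψ⟩ := hh
  exact ⟨φ + ψ, by simp [hφ0, hψ0], fun x => by simp [hφ, hψ]⟩

lemma InB.sum {f : C_c(Z, ℝ)} {ι : Type*} {s : Finset ι} {g : ι → C_c(Z, ℝ)}
    (hg : ∀ i ∈ s, InB f (g i)) : InB f (∑ i ∈ s, g i) :=
  Finset.sum_induction g (InB f) (fun _ _ => InB.add) (InB.zero f) hg

lemma inB_compCc (φ : C(ℝ, ℝ)) (hφ : φ 0 = 0) (f : C_c(Z, ℝ)) : InB f (compCc φ hφ f) :=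
  ⟨φ, hφ, fun _ => rfl⟩

lemma support_compCc_subset (φ : C(ℝ, ℝ)) (hφ : φ 0 = 0) (f : C_c(Z, ℝ)) :
    support (compCc φ hφ f) ⊆ support f := fun x hx hfx =>
  hx (show φ (f x) = 0 by rw [hfx, hφ])

lemma exists_forall_le_nat_mul (g : C_c(Z, ℝ)) {δ : ℝ} (hδ : 0 < δ) :
    ∃ N : ℕ, ∀ x, g x ≤ N * δ := by
  obtain ⟨N, hN⟩ := exists_nat_ge (‖g.toBoundedContinuousFunction‖ / δ)
  refine ⟨N, fun x => ?_⟩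
  calc g x ≤ ‖g.toBoundedContinuousFunction x‖ := le_abs_self (g x)
    _ ≤ ‖g.toBoundedContinuousFunction‖ := BoundedContinuousFunction.norm_coe_le_norm _ x
    _ ≤ N * δ := (div_le_iff₀ hδ).1 hN

lemma support_posPart_subset (v : C_c(Z, ℝ)) : support v⁺ ⊆ support v := fun x hx h0 =>
  hx (show max (v x) 0 = 0 by rw [h0, max_self])

lemma support_negPart_subset (v : C_c(Z, ℝ)) : support v⁻ ⊆ support v := fun x hx h0 =>
  hx (show max (-v x) 0 = 0 by rw [h0, neg_zero, max_self])

noncomputable def layer (h : C_c(Z, ℝ)) {δ : ℝ} (hδ : 0 ≤ δ) (j : ℕ) : C_c(Z, ℝ) :=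
  compCc ⟨fun r => min (max (r - j * δ) 0) δ, by fun_prop⟩
    (by simp [hδ, mul_nonneg (Nat.cast_nonneg j) hδ]) h

section Layer

variable (h : C_c(Z, ℝ)) {δ : ℝ} (hδ : 0 ≤ δ)

lemma layer_apply (j : ℕ) (x : Z) : layer h hδ j x = min (max (h x - j * δ) 0) δ := rfl

lemma layer_mem_Icc (j : ℕ) (x : Z) : layer h hδ j x ∈ Icc 0 δ :=
  ⟨le_min (le_max_right _ _) hδ, min_le_right _ _⟩

lemma lt_of_layer_ne_zero {j : ℕ} {x : Z} (hx : layer h hδ j x ≠ 0) : j * δ < h x := by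
  by_contra! hle
  exact hx (by rw [layer_apply, max_eq_right (by linarith), min_eq_left hδ])

lemma layer_eq_of_le {j : ℕ} {x : Z} (hx : (j + 1) * δ ≤ h x) : layer h hδ j x = δ := by
  rw [layer_apply, max_eq_left (by linarith), min_eq_right (by linarith)]

lemma support_layer_subset (j : ℕ) : support (layer h hδ j) ⊆ support h :=
  support_compCc_subset _ _ h

lemma sum_range_layer {N : ℕ} (hh : ∀ x, h x ∈ Icc 0 (N * δ)) :
    ∑ j ∈ Finset.range N, layer h hδ j = h := by
  have key : ∀ (n : ℕ) (r : ℝ),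
      ∑ j ∈ Finset.range n, min (max (r - j * δ) 0) δ = min (max r 0) (n * δ) := by
    intro n r
    induction n with
    | zero => simp
    | succ n ih =>
      rw [Finset.sum_range_succ, ih]
      have : 0 ≤ (n : ℝ) * δ := by positivity
      push_cast
      rcases le_total r (n * δ) with hr | hr <;> grind
  ext x
  rw [CompactlySupportedContinuousMap.sum_apply,
    Finset.sum_congr rfl fun j _ => layer_apply h hδ j x, key, max_eq_left (hh x).1,
    min_eq_left (hh x).2]

end Layer

namespace IsQuasiIntegral

variable {ρ : C_c(Z, ℝ) → ℝ}

lemma map_zero (hρ : IsQuasiIntegral ρ) : ρ 0 = 0 := by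
  simpa using hρ.smul 0 0

lemma map_sum (hρ : IsQuasiIntegral ρ) {f : C_c(Z, ℝ)} {ι : Type*} {s : Finset ι}
    {g : ι → C_c(Z, ℝ)} (hg : ∀ i ∈ s, InB f (g i)) :
    ρ (∑ i ∈ s, g i) = ∑ i ∈ s, ρ (g i) := by
  classical
  induction s using Finset.induction_on with
  | empty => simp [hρ.map_zero]
  | insert i s hi ih =>
    have hs : ∀ j ∈ s, InB f (g j) := fun j hj => hg j (Finset.mem_insert_of_mem hj)
    rw [Finset.sum_insert hi, Finset.sum_insert hi,
      hρ.add f _ _ (hg i (Finset.mem_insert_self i s)) (InB.sum hs), ih hs]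

lemma map_eq_posPart_sub_negPart (hρ : IsQuasiIntegral ρ) (v : C_c(Z, ℝ)) :
    ρ v = ρ v⁺ - ρ v⁻ := by
  have hpos : InB v v⁺ := ⟨⟨fun r => max r 0, by fun_prop⟩, max_self 0, fun _ => rfl⟩
  have hneg : InB v (-v⁻) := ⟨⟨fun r => -max (-r) 0, by fun_prop⟩, by simp, fun _ => rfl⟩
  have hsplit := hρ.add v _ _ hpos hneg
  rwa [← sub_eq_add_neg, posPart_sub_negPart, ← neg_one_smul ℝ v⁻, hρ.smul, neg_one_mul,
    ← sub_eq_add_neg] at hsplit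

/-- The key to comparing values of `ρ` on different subalgebras: both `u` and `v` are functions
of `u + v`. -/
lemma map_le_of_eqOn_support (hρ : IsQuasiIntegral ρ) {u v : C_c(Z, ℝ)} {c : ℝ} (hc : 0 ≤ c)
    (hv : ∀ x, v x ∈ Icc 0 c) (hu : ∀ x, u x ∈ Icc 0 c) (hvu : EqOn u (fun _ => c) (support v)) :
    ρ v ≤ ρ u := by
  have hcases : ∀ x, v x = 0 ∨ u x = c := fun x => (em (v x = 0)).imp_right fun hx => hvu hx
  have hvB : InB (u + v) v := by
    refine ⟨⟨fun r => max (r - c) 0, by fun_prop⟩, by simpa using hc, fun x => ?_⟩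
    change v x = max (u x + v x - c) 0
    rcases hcases x with hx | hx <;> grind
  have hdB : InB (u + v) (u - v) := by
    refine ⟨⟨fun r => min r c - max (r - c) 0, by fun_prop⟩, by simp [hc], fun x => ?_⟩
    change u x - v x = min (u x + v x) c - max (u x + v x - c) 0
    rcases hcases x with hx | hx <;> grind
  have hdiff : 0 ≤ ρ (u - v) := hρ.pos _ fun x => by
    change 0 ≤ u x - v x
    rcases hcases x with hx | hx <;> grind
  have hsplit := hρ.add _ _ _ hdB hvB
  rw [sub_add_cancel] at hsplit
  linarith

lemma map_le_mul_of_eqOn_support (hρ : IsQuasiIntegral ρ) {w u : C_c(Z, ℝ)} {c : ℝ} (hc : 0 ≤ c)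
    (hw : ∀ x, w x ∈ Icc 0 c) (hu : ∀ x, u x ∈ Icc 0 1) (hwu : EqOn u 1 (support w)) :
    ρ w ≤ c * ρ u := by
  rw [← hρ.smul]
  refine hρ.map_le_of_eqOn_support hc hw (fun x => ?_) fun x hx => ?_
  · exact ⟨mul_nonneg hc (hu x).1, mul_le_of_le_one_right hc (hu x).2⟩
  · simp [hwu hx]

lemma abs_map_le_mul (hρ : IsQuasiIntegral ρ) {v u : C_c(Z, ℝ)} {M : ℝ} (hM : 0 ≤ M)
    (hv : ∀ x, |v x| ≤ M) (hu : ∀ x, u x ∈ Icc 0 1) (hvu : EqOn u 1 (support v)) :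
    |ρ v| ≤ M * ρ u := by
  have hpos : ρ v⁺ ≤ M * ρ u :=
    hρ.map_le_mul_of_eqOn_support hM
      (fun x => ⟨le_max_right _ _, max_le ((le_abs_self _).trans (hv x)) hM⟩) hu
      (hvu.mono (support_posPart_subset v))
  have hneg : ρ v⁻ ≤ M * ρ u :=
    hρ.map_le_mul_of_eqOn_support hM
      (fun x => ⟨le_max_right _ _, max_le ((neg_le_abs _).trans (hv x)) hM⟩) hu
      (hvu.mono (support_negPart_subset v))
  have := hρ.pos v⁺ fun x => le_max_right _ _
  have := hρ.pos v⁻ fun x => le_max_right _ _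
  rw [hρ.map_eq_posPart_sub_negPart, abs_le]
  constructor <;> linarith

lemma map_eq_sum_layer (hρ : IsQuasiIntegral ρ) (h : C_c(Z, ℝ)) {δ : ℝ} (hδ : 0 ≤ δ) {N : ℕ}
    (hh : ∀ x, h x ∈ Icc 0 (N * δ)) :
    ρ h = ∑ j ∈ Finset.range N, ρ (layer h hδ j) := by
  conv_lhs => rw [← sum_range_layer h hδ hh]
  exact hρ.map_sum fun j _ => inB_compCc _ _ h

/-- Layer `j + 2` of `h` is supported where layer `j` of `g` is full. -/
lemma map_le_add_of_le_add (hρ : IsQuasiIntegral ρ) {g h u : C_c(Z, ℝ)} {δ : ℝ} (hδ : 0 < δ)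
    (hg : ∀ x, 0 ≤ g x) (hh : ∀ x, 0 ≤ h x) (hu : ∀ x, u x ∈ Icc 0 1)
    (hhu : EqOn u 1 (support h)) (hgh : ∀ x, h x ≤ g x + δ) :
    ρ h ≤ ρ g + 2 * δ * ρ u := by
  obtain ⟨N, hN⟩ : ∃ N : ℕ, ∀ x, g x + h x ≤ N * δ := exists_forall_le_nat_mul (g + h) hδ
  have hNg : ∀ x, g x ∈ Icc 0 (N * δ) := fun x => ⟨hg x, by linarith [hN x, hh x]⟩
  have hNh : ∀ x, h x ∈ Icc 0 ((N + 1 + 1 : ℕ) * δ) := fun x =>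
    ⟨hh x, by push_cast; linarith [hN x, hg x]⟩
  have hshift : ∑ j ∈ Finset.range N, ρ (layer h hδ.le (j + 1 + 1)) ≤
      ∑ j ∈ Finset.range N, ρ (layer g hδ.le j) :=
    Finset.sum_le_sum fun j _ => hρ.map_le_of_eqOn_support hδ.le (layer_mem_Icc _ _ _)
      (layer_mem_Icc _ _ _) fun x hx => layer_eq_of_le g hδ.le <| by
        have := lt_of_layer_ne_zero h hδ.le hx
        push_cast at this
        linarith [hgh x]
  have hbottom : ∀ j, ρ (layer h hδ.le j) ≤ δ * ρ u := fun j =>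
    hρ.map_le_mul_of_eqOn_support hδ.le (layer_mem_Icc _ _ _) hu
      (hhu.mono (support_layer_subset h hδ.le j))
  rw [hρ.map_eq_sum_layer g hδ.le hNg, hρ.map_eq_sum_layer h hδ.le hNh, Finset.sum_range_succ',
    Finset.sum_range_succ']
  linarith [hbottom 0, hbottom 1]

lemma map_posPart_le_add (hρ : IsQuasiIntegral ρ) {g h u : C_c(Z, ℝ)} {δ : ℝ} (hδ : 0 < δ)
    (hu : ∀ x, u x ∈ Icc 0 1) (hhu : EqOn u 1 (support h)) (hgh : ∀ x, |g x - h x| ≤ δ) :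
    ρ h⁺ ≤ ρ g⁺ + 2 * δ * ρ u :=
  hρ.map_le_add_of_le_add hδ (fun x => le_max_right _ _) (fun x => le_max_right _ _) hu
    (hhu.mono (support_posPart_subset h)) fun x => by
      change max (h x) 0 ≤ max (g x) 0 + δ
      have := (abs_max_sub_max_le_abs (h x) (g x) 0).trans ((abs_sub_comm _ _).trans_le (hgh x))
      linarith [(abs_le.1 this).2]

lemma abs_map_sub_le (hρ : IsQuasiIntegral ρ) {g h u : C_c(Z, ℝ)} {δ : ℝ} (hδ : 0 < δ)
    (hu : ∀ x, u x ∈ Icc 0 1) (hgu : EqOn u 1 (support g)) (hhu : EqOn u 1 (support h))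
    (hgh : ∀ x, |g x - h x| ≤ δ) : |ρ g - ρ h| ≤ 4 * δ * ρ u := by
  have hhg : ∀ x, |h x - g x| ≤ δ := fun x => abs_sub_comm (h x) (g x) ▸ hgh x
  have h₁ := hρ.map_posPart_le_add hδ hu hhu hgh
  have h₂ := hρ.map_posPart_le_add hδ hu hgu hhg
  have h₃ := hρ.map_posPart_le_add (g := -g) (h := -h) hδ hu (by simpa using hhu) fun x =>
    (neg_sub_neg (g x) (h x)).symm ▸ hhg x
  have h₄ := hρ.map_posPart_le_add (g := -h) (h := -g) hδ hu (by simpa using hgu) fun x =>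
    (neg_sub_neg (h x) (g x)).symm ▸ hgh x
  rw [posPart_neg, posPart_neg] at h₃ h₄
  rw [hρ.map_eq_posPart_sub_negPart g, hρ.map_eq_posPart_sub_negPart h, abs_le]
  constructor <;> linarith

lemma tendsto_of_tendstoUniformly (hρ : IsQuasiIntegral ρ) {ι : Type*} {l : Filter ι}
    {F : ι → C_c(Z, ℝ)} {G u : C_c(Z, ℝ)} (hu : ∀ x, u x ∈ Icc 0 1)
    (hFu : ∀ i, EqOn u 1 (support (F i))) (hGu : EqOn u 1 (support G))
    (hFG : TendstoUniformly (fun i => ⇑(F i)) G l) :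
    Tendsto (fun i => ρ (F i)) l (𝓝 (ρ G)) := by
  have hρu : 0 ≤ ρ u := hρ.pos u fun x => (hu x).1
  rw [Metric.tendsto_nhds]
  intro ε hε
  have hδ : 0 < ε / (4 * (ρ u + 1)) := by positivity
  filter_upwards [Metric.tendstoUniformly_iff.1 hFG _ hδ] with i hi
  rw [Real.dist_eq]
  calc |ρ (F i) - ρ G| ≤ 4 * (ε / (4 * (ρ u + 1))) * ρ u :=
        hρ.abs_map_sub_le hδ hu (hFu i) hGu fun x => (abs_sub_comm _ _).trans_le (hi x).le
    _ = ε * (ρ u / (ρ u + 1)) := by field_simp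
    _ < ε := mul_lt_of_lt_one_right hε ((div_lt_one (by linarith)).2 (by linarith))

end IsQuasiIntegral

lemma qiOpen_mono (ρ : C_c(Z, ℝ) → ℝ) {U V : Set Z} (hUV : U ⊆ V) :
    qiOpen ρ U ≤ qiOpen ρ V :=
  biSup_mono fun _ hf => ⟨hf.1, hf.2.trans hUV⟩

lemma ofReal_le_qiOpen (ρ : C_c(Z, ℝ) → ℝ) {u : C_c(Z, ℝ)} {U : Set Z}
    (hu : ∀ x, u x ∈ Icc 0 1) (huU : tsupport u ⊆ U) : ENNReal.ofReal (ρ u) ≤ qiOpen ρ U :=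
  le_iSup₂ (f := fun (v : C_c(Z, ℝ)) (_ : (∀ x, 0 ≤ v x ∧ v x ≤ 1) ∧ tsupport v ⊆ U) =>
    ENNReal.ofReal (ρ v)) u ⟨hu, huU⟩

lemma qiMeas_eq_iInf (ρ : C_c(Z, ℝ) → ℝ) (A : Set Z) :
    qiMeas ρ A = ⨅ (U : Set Z) (_ : IsOpen U ∧ A ⊆ U), qiOpen ρ U := by
  unfold qiMeas
  split_ifs with hA
  · exact le_antisymm (le_iInf₂ fun U hU => qiOpen_mono ρ hU.2) (iInf₂_le A ⟨hA, subset_rfl⟩)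
  · rfl

lemma exists_one_of_isCompact_subset_isOpen [R1Space Z] [LocallyCompactSpace Z] {K U : Set Z}
    (hK : IsCompact K) (hU : IsOpen U) (hKU : K ⊆ U) :
    ∃ u : C_c(Z, ℝ), (∀ x, u x ∈ Icc 0 1) ∧ EqOn u 1 K ∧ tsupport u ⊆ U := by
  obtain ⟨u, hu1, hu, huU, hu01⟩ := exists_continuousMap_one_of_isCompact_subset_isOpen hK hU hKU
  exact ⟨⟨u, hu⟩, hu01, hu1, huU⟩

lemma iSup_ofReal_abs_ne_top (g : C_c(Z, ℝ)) : ⨆ x, ENNReal.ofReal |g x| ≠ ⊤ :=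
  ne_top_of_le_ne_top ENNReal.ofReal_ne_top <| iSup_le fun x =>
    ENNReal.ofReal_le_ofReal (BoundedContinuousFunction.norm_coe_le_norm
      g.toBoundedContinuousFunction x)

end QuasiIntegral

section Products

variable {X Y : Type*} [TopologicalSpace X] [T2Space X] [TopologicalSpace Y]

lemma support_fiberY_subset (f : C_c(X × Y, ℝ)) (y : Y) :
    support (fiberY f y) ⊆ Prod.fst '' tsupport f := fun x hx =>
  ⟨(x, y), subset_tsupport _ hx, rfl⟩

lemma fiberY_eq_zero (f : C_c(X × Y, ℝ)) {y : Y} (hy : y ∉ Prod.snd '' tsupport f) :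
    fiberY f y = 0 := by
  ext x
  by_contra hx
  exact hy ⟨(x, y), subset_tsupport _ hx, rfl⟩

lemma tendstoUniformly_fiberY (f : C_c(X × Y, ℝ)) (y₀ : Y) :
    TendstoUniformly (fun y => ⇑(fiberY f y)) (fiberY f y₀) (𝓝 y₀) := by
  set K := Prod.fst '' tsupport f
  let g : C(Y × X, ℝ) := (f : C(X × Y, ℝ)).comp ⟨Prod.swap, continuous_swap⟩
  have hK : TendstoUniformlyOn (fun y => ⇑(fiberY f y)) (fiberY f y₀) (𝓝 y₀) K :=
    ContinuousMap.tendsto_iff_forall_isCompact_tendstoUniformlyOn.1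
      (g.curry.continuous.tendsto y₀) K (f.hasCompactSupport'.image continuous_fst)
  rw [Metric.tendstoUniformly_iff]
  intro ε hε
  filter_upwards [Metric.tendstoUniformlyOn_iff.1 hK ε hε] with y hy x
  by_cases hx : x ∈ K
  · exact hy x hx
  · rw [notMem_support.1 fun h => hx (support_fiberY_subset f y h),
      notMem_support.1 fun h => hx (support_fiberY_subset f y₀ h), dist_self]
    exact hε

variable {ρ : C_c(X, ℝ) → ℝ}

lemma hasCompactSupport_Tmap [R1Space Y] (hρ : IsQuasiIntegral ρ) (f : C_c(X × Y, ℝ)) :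
    HasCompactSupport (Tmap ρ f) :=
  HasCompactSupport.intro (f.hasCompactSupport'.image continuous_snd) fun y hy => by
    rw [Tmap, fiberY_eq_zero f hy, hρ.map_zero]

lemma continuous_Tmap [LocallyCompactSpace X] (hρ : IsQuasiIntegral ρ) (f : C_c(X × Y, ℝ)) :
    Continuous (Tmap ρ f) := by
  obtain ⟨u, hu, hu1, -⟩ := exists_one_of_isCompact_subset_isOpen
    (f.hasCompactSupport'.image continuous_fst) isOpen_univ (subset_univ _)
  exact continuous_iff_continuousAt.2 fun y₀ =>
    hρ.tendsto_of_tendstoUniformly hu (fun y => hu1.mono (support_fiberY_subset f y))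
      (hu1.mono (support_fiberY_subset f y₀)) (tendstoUniformly_fiberY f y₀)

lemma iSup_abs_Tmap_le [LocallyCompactSpace X] (hρ : IsQuasiIntegral ρ) (f : C_c(X × Y, ℝ)) :
    ⨆ y, ENNReal.ofReal |Tmap ρ f y| ≤
      (⨆ z, ENNReal.ofReal |f z|) * qiMeas ρ (Prod.fst '' tsupport f) := by
  set S := ⨆ z, ENNReal.ofReal |f z|
  have hS : S ≠ ⊤ := iSup_ofReal_abs_ne_top f
  have hfS : ∀ z, |f z| ≤ S.toReal := fun z =>
    (ENNReal.ofReal_le_iff_le_toReal hS).1 (le_iSup (fun z => ENNReal.ofReal |f z|) z)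
  have : Nonempty {U : Set X // IsOpen U ∧ Prod.fst '' tsupport f ⊆ U} :=
    ⟨⟨univ, isOpen_univ, subset_univ _⟩⟩
  rw [qiMeas_eq_iInf, iInf_subtype', ENNReal.mul_iInf fun h => absurd h hS]
  refine le_iInf fun ⟨U, hU, hKU⟩ => iSup_le fun y => ?_
  obtain ⟨u, hu, hu1, huU⟩ := exists_one_of_isCompact_subset_isOpen
    (f.hasCompactSupport'.image continuous_fst) hU hKU
  calc ENNReal.ofReal |Tmap ρ f y|
      ≤ ENNReal.ofReal (S.toReal * ρ u) := ENNReal.ofReal_le_ofReal <|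
        hρ.abs_map_le_mul ENNReal.toReal_nonneg (fun x => hfS (x, y)) hu
          (hu1.mono (support_fiberY_subset f y))
    _ = S * ENNReal.ofReal (ρ u) := by
        rw [ENNReal.ofReal_mul ENNReal.toReal_nonneg, ENNReal.ofReal_toReal hS]
    _ ≤ S * qiOpen ρ U := by gcongr; exact ofReal_le_qiOpen ρ hu huU

end Products

section Swap

variable {X Y : Type*} [TopologicalSpace X] [TopologicalSpace Y]

noncomputable def swapCc (f : C_c(X × Y, ℝ)) : C_c(Y × X, ℝ) :=
  f.comp (Homeomorph.prodComm Y X).toCocompactMap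

lemma Smap_eq_Tmap_swapCc [T2Space Y] (η : C_c(Y, ℝ) → ℝ) (f : C_c(X × Y, ℝ)) :
    Smap η f = Tmap η (swapCc f) := rfl

lemma image_fst_tsupport_swapCc (f : C_c(X × Y, ℝ)) :
    Prod.fst '' tsupport (swapCc f) = Prod.snd '' tsupport f := by
  have hswap : tsupport (swapCc f) = Prod.swap ⁻¹' tsupport f :=
    tsupport_comp_eq_preimage f (Homeomorph.prodComm Y X)
  rw [hswap, ← image_swap_eq_preimage_swap, image_image]
  rfl

lemma iSup_ofReal_abs_swapCc (f : C_c(X × Y, ℝ)) :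
    ⨆ z, ENNReal.ofReal |swapCc f z| = ⨆ z, ENNReal.ofReal |f z| :=
  (Equiv.prodComm Y X).iSup_comp (g := fun z => ENNReal.ofReal |f z|)

end Swap

end QLF

namespace QLF
theorem statement3_general {X Y : Type*}
    [TopologicalSpace X] [LocallyCompactSpace X] [T2Space X]
    [TopologicalSpace Y] [LocallyCompactSpace Y] [T2Space Y]
    (f : C_c(X × Y, ℝ)) (ρ : C_c(X, ℝ) → ℝ) (η : C_c(Y, ℝ) → ℝ)
    (hρ : IsQuasiIntegral ρ) (hη : IsQuasiIntegral η) :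
    (Continuous (Tmap ρ f) ∧ HasCompactSupport (Tmap ρ f) ∧
      (⨆ y, ENNReal.ofReal |Tmap ρ f y|) ≤
        (⨆ z, ENNReal.ofReal |f z|) * qiMeas ρ (Prod.fst '' tsupport f)) ∧
    (Continuous (Smap η f) ∧ HasCompactSupport (Smap η f) ∧
      (⨆ x, ENNReal.ofReal |Smap η f x|) ≤
        (⨆ z, ENNReal.ofReal |f z|) * qiMeas η (Prod.snd '' tsupport f)) := by
  refine ⟨⟨continuous_Tmap hρ f, hasCompactSupport_Tmap hρ f, iSup_abs_Tmap_le hρ f⟩, ?_⟩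
  rw [Smap_eq_Tmap_swapCc, ← image_fst_tsupport_swapCc, ← iSup_ofReal_abs_swapCc]
  exact ⟨continuous_Tmap hη _, hasCompactSupport_Tmap hη _, iSup_abs_Tmap_le hη _⟩

theorem statement3 {X Y : Type*}
    [TopologicalSpace X] [LocallyCompactSpace X] [T2Space X] [ConnectedSpace X]
    [TopologicalSpace Y] [LocallyCompactSpace Y] [T2Space Y] [ConnectedSpace Y]
    (f : C_c(X × Y, ℝ)) (ρ : C_c(X, ℝ) → ℝ) (η : C_c(Y, ℝ) → ℝ)
    (hρ : IsQuasiIntegral ρ) (hη : IsQuasiIntegral η) :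
    (Continuous (Tmap ρ f) ∧ HasCompactSupport (Tmap ρ f) ∧
      (⨆ y, ENNReal.ofReal |Tmap ρ f y|) ≤
        (⨆ z, ENNReal.ofReal |f z|) * qiMeas ρ (Prod.fst '' tsupport f)) ∧
    (Continuous (Smap η f) ∧ HasCompactSupport (Smap η f) ∧
      (⨆ x, ENNReal.ofReal |Smap η f x|) ≤
        (⨆ z, ENNReal.ofReal |f z|) * qiMeas η (Prod.snd '' tsupport f)) :=
  statement3_general f ρ η hρ hη
end QLF
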